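/- arXiv:1008.1117 — 3 statements merged into one kernel-verified Lean document; each statement's English description precedes it below -/
import Mathlib

section
/- Let V be a finite-dimensional vector space over a field k and let x ∈ End(V). With respect to the trace form B(y, z) = tr(yz) on End(V), the orthogonal complement of the centralizer E^x = {y ∈ End(V) : yx = xy} equals the image of ad x, i.e., (E^x)^⊥ = {[y, x] : y ∈ End(V)}. -/
/-!
For the trace form `B`, `ad x` is skew-adjoint (`B ⁅x, y⁆ z = -B y ⁅x, z⁆`), so its range is
orthogonal to its kernel, the centralizer of `x`. Since `B` is nondegenerate, the orthogonal
complement of the kernel has dimension `dim End V - dim ker (ad x) = dim range (ad x)`,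
so the inclusion is an equality.
-/

open Module LinearMap

namespace LinearMap.BilinForm

variable {K V : Type*} [Field K] [AddCommGroup V] [Module K V] [FiniteDimensional K V]

theorem orthogonal_ker_eq_range_of_isSkewAdjoint {B : LinearMap.BilinForm K V}
    (hB : B.Nondegenerate) {T : Module.End K V} (hT : IsSkewAdjoint B T) :
    B.orthogonal (ker T) = range T := by
  have hle : range T ≤ B.orthogonal (ker T) := by
    rintro _ ⟨w, rfl⟩ y hy
    have h := hT y w
    rw [mem_ker.mp hy, zero_left, Pi.neg_apply, map_neg, eq_comm, neg_eq_zero] at h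
    exact h
  refine (Submodule.eq_of_le_of_finrank_le hle ?_).symm
  rw [finrank_orthogonal hB]
  have := finrank_range_add_finrank_ker T
  omega

end LinearMap.BilinForm

theorem LieAlgebra.orthogonal_ker_ad_eq_range {K L : Type*} [Field K] [LieRing L]
    [LieAlgebra K L] [FiniteDimensional K L] {B : LinearMap.BilinForm K L} (hB : B.Nondegenerate)
    (hBinv : B.lieInvariant L) (x : L) :
    B.orthogonal (ker (ad K L x)) = range (ad K L x) :=
  BilinForm.orthogonal_ker_eq_range_of_isSkewAdjoint hB fun y z => by
    rw [Pi.neg_apply, map_neg]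
    exact hBinv x y z

attribute [local instance] LieRing.ofAssociativeRing

namespace LieModule

variable (R M : Type*) [CommRing R] [AddCommGroup M] [Module R M]

theorem traceForm_end_apply (y z : Module.End R M) :
    traceForm R (Module.End R M) M y z = trace R M (y * z) :=
  rfl

theorem traceForm_end_nondegenerate [Module.Free R M] [Module.Finite R M] :
    (traceForm R (Module.End R M) M).Nondegenerate := by
  refine (traceForm_isSymm R _ M).isRefl.nondegenerate_iff_separatingLeft.mpr fun y hy => ?_
  let b := Free.chooseBasis R M
  apply (toMatrix b b).injective
  rw [map_zero, Matrix.ext_iff_trace_mul_right]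
  intro m
  obtain ⟨z, rfl⟩ := (toMatrix b b).surjective m
  rw [← toMatrix_mul, ← trace_eq_matrix_trace, ← traceForm_end_apply, hy z, zero_mul,
    Matrix.trace_zero]

end LieModule

/-- The orthogonal complement of the centralizer of `x` under the trace form on
`End(V)` is the image of `ad x`. -/
theorem stmt_6 (k V : Type*) [Field k] [AddCommGroup V] [Module k V]
    [FiniteDimensional k V] (x : Module.End k V) :
    {z : Module.End k V | ∀ y : Module.End k V, y * x = x * y →
        LinearMap.trace k V (y * z) = 0}
      = Set.range (fun y : Module.End k V => y * x - x * y) := by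
  have horth := LieAlgebra.orthogonal_ker_ad_eq_range
    (LieModule.traceForm_end_nondegenerate k V)
    (LieModule.traceForm_lieInvariant k (Module.End k V) V) x
  rw [← range_neg] at horth
  ext z
  have hz := SetLike.ext_iff.mp horth z
  simp only [BilinForm.mem_orthogonal_iff, mem_ker, LieAlgebra.ad_apply, Ring.lie_def,
    sub_eq_zero, mem_range, LinearMap.neg_apply, neg_sub, LieModule.traceForm_end_apply] at hz
  simpa [eq_comm] using hz
end

section
/- Let V be a vector space with basis {v_{ij} : 1 ≤ i ≤ ℓ, 1 ≤ j ≤ λ_i}, x the nilpotent with x v_{ij} = v_{i,j−1}, and v = Σ_i v_{i,ρ_i} where ρ_i ≤ λ_i (with v_{i,0} := 0, terms with ρ_i = 0 omitted). For t ∈ kˣ let g_t ∈ GL(V) be defined by g_t v_{ij} = t^{j−ρ_i−1} v_{ij}, and let (g_t, t) act on V by (g, c)·w = g w. Then the pair (g_t, t) fixes the enhanced point (v, x) for the action (g,c)·(w, y) = (g w, c·g y g^{−1}); more concretely, g_t v = t^{−1} v and g_t x g_t^{−1} = t^{−1} x. -/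
/-!
`g_t` is diagonal in the basis `b`, with eigenvalue `t ^ (j - ρ_i)` on `b ⟨i, j⟩`. The
summands of `v` all have exponent `-1`, and `x` lowers the exponent by one, so
`g_t x = t⁻¹ x g_t`.
-/

theorem LinearEquiv.conj_eq_of_comp_eq {R M N : Type*} [Semiring R] [AddCommMonoid M]
    [AddCommMonoid N] [Module R M] [Module R N] (g : M ≃ₗ[R] N)
    {x : Module.End R M} {y : Module.End R N} (h : g.toLinearMap ∘ₗ x = y ∘ₗ g.toLinearMap) :
    g.toLinearMap ∘ₗ x ∘ₗ g.symm.toLinearMap = y := by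
  rw [← LinearMap.comp_assoc, h, LinearMap.comp_assoc, g.comp_symm, LinearMap.comp_id]

theorem Module.Basis.comp_eq_inv_smul_comp_of_lowers_weight {ι k V : Type*} [Field k]
    [AddCommGroup V] [Module k V] (b : Module.Basis ι k V) {g x : Module.End k V} {t : k}
    (ht : t ≠ 0) (w : ι → ℤ) (hg : ∀ a, g (b a) = t ^ w a • b a)
    (hx : ∀ a, g (x (b a)) = t ^ (w a - 1) • x (b a)) :
    g ∘ₗ x = t⁻¹ • x ∘ₗ g :=
  b.ext fun a => by
    simp only [LinearMap.comp_apply, LinearMap.smul_apply, hg, hx, map_smul, smul_smul,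
      zpow_sub_one₀ ht, mul_comm]

/-- `j` is zero-based here, so `v_{i,ρ_i} = b ⟨i, ρ_i - 1⟩`. -/
theorem stmt_13 (k V : Type*) [Field k] [AddCommGroup V] [Module k V]
    (ℓ : ℕ) (lam : Fin ℓ → ℕ)
    (b : Module.Basis ((i : Fin ℓ) × Fin (lam i)) k V)
    (x : Module.End k V)
    (hx : ∀ (i : Fin ℓ) (j : Fin (lam i)), x (b ⟨i, j⟩) =
      if h : 1 ≤ (j : ℕ) then
        b ⟨i, ⟨(j : ℕ) - 1, Nat.lt_of_le_of_lt (Nat.sub_le _ _) j.isLt⟩⟩ else 0)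
    (ρ : Fin ℓ → ℕ) (hρ : ∀ i, ρ i ≤ lam i)
    (v : V)
    (hv : v = ∑ i : Fin ℓ,
      if h : 1 ≤ ρ i then b ⟨i, ⟨ρ i - 1, by have := hρ i; omega⟩⟩ else 0)
    (t : kˣ) (g : V ≃ₗ[k] V)
    (hg : ∀ (i : Fin ℓ) (j : Fin (lam i)),
      g (b ⟨i, j⟩) = ((t : k) ^ (((j : ℕ) : ℤ) - (ρ i : ℤ))) • b ⟨i, j⟩) :
    g v = (t : k)⁻¹ • v ∧
    g.toLinearMap ∘ₗ x ∘ₗ g.symm.toLinearMap = (t : k)⁻¹ • x ∧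
    (t : k) • (g v) = v ∧
    (t : k) • (g.toLinearMap ∘ₗ x ∘ₗ g.symm.toLinearMap) = x := by
  have ht : (t : k) ≠ 0 := t.ne_zero
  have hgv : g v = (t : k)⁻¹ • v := by
    rw [hv, map_sum, Finset.smul_sum]
    refine Finset.sum_congr rfl fun i _ => ?_
    split_ifs with h
    · rw [hg, ← zpow_neg_one]
      congr 2
      push_cast [Nat.cast_sub h]
      ring
    · rw [map_zero, smul_zero]
  have hx_lowers : ∀ a : (i : Fin ℓ) × Fin (lam i),
      g (x (b a)) = (t : k) ^ (((a.2 : ℕ) : ℤ) - ρ a.1 - 1) • x (b a) := by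
    rintro ⟨i, j⟩
    rw [hx]
    split_ifs with h
    · rw [hg]
      congr 2
      push_cast [Nat.cast_sub h]
      ring
    · rw [map_zero, smul_zero]
  have hconj : g.toLinearMap ∘ₗ x ∘ₗ g.symm.toLinearMap = (t : k)⁻¹ • x :=
    g.conj_eq_of_comp_eq
      (b.comp_eq_inv_smul_comp_of_lowers_weight ht _ (fun a => hg a.1 a.2) hx_lowers)
  exact ⟨hgv, hconj, by rw [hgv, smul_inv_smul₀ ht], by rw [hconj, smul_inv_smul₀ ht]⟩
end

section
/- Let q ≥ 2 be an integer and, for each i in a finite range 0 ≤ i ≤ N, let A_i be a finite multiset of complex numbers each of absolute value q^{i/2} (all conjugates condition simplified to: each α ∈ A_i satisfies |α| = q^{i/2}). Suppose there is a polynomial P ∈ ℤ[t] such that Σ_{i=0}^{N} (−1)^i Σ_{α ∈ A_i} α^s = P(q^s) for all integers s ≥ 1. Then A_i = ∅ for all odd i, every α ∈ A_i with i even equals q^{i/2}, and P(t) = Σ_{i even} |A_i| t^{i/2}; in particular P has nonnegative integer coefficients. -/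
/-
Encode both sides of the trace formula as finitely supported weights on `ℂ`: the alternating
multiplicities `∑ (-1)^i [A i]`, and the coefficient `aₙ` of `P` placed at the point `q^n`.
Their power sums `∑ c(α) α^s` agree for every `s ≥ 1` and neither has weight at `0`, so by
Dedekind's independence of the characters `s ↦ α^s` the two weight functions coincide.
Since the `A i` have pairwise distinct absolute values, no cancellation between different
degrees occurs: every `α ∈ A i` carries nonzero weight, hence is some `q^n`, and comparing
absolute values gives `i = 2n`. The weight at `q^n` is then both `aₙ` and `#A (2n)`.
-/

open Finsupp Polynomial

theorem linearIndependent_geometric (R : Type*) [CommRing R] [IsDomain R] :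
    LinearIndependent R (fun α : R => fun s : ℕ => α ^ s) :=
  ((linearIndependent_monoidHom (Multiplicative ℕ) R).comp (powersHom R)
    (powersHom R).injective).map' (LinearMap.funLeft R R Multiplicative.ofAdd)
    (LinearMap.ker_eq_bot.mpr <|
      LinearMap.funLeft_injective_of_surjective _ _ _ Multiplicative.ofAdd.surjective)

section
variable {K : Type*} [Field K]

theorem linearIndepOn_geometric_succ :
    LinearIndepOn K (fun α : K => fun s : ℕ => α ^ (s + 1)) {0}ᶜ := by
  have hsmul : (fun α : ({0}ᶜ : Set K) => fun s : ℕ => (α : K) ^ (s + 1)) =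
      (fun α : ({0}ᶜ : Set K) => Units.mk0 α.1 α.2) •
        ((fun α : K => fun s : ℕ => α ^ s) ∘ Subtype.val) := by
    funext α s
    exact pow_succ' _ _
  rw [LinearIndepOn, hsmul]
  exact ((linearIndependent_geometric K).comp _ Subtype.val_injective).units_smul _

theorem Finsupp.eq_of_linearCombination_pow_eq {f g : K →₀ K} (hf : f 0 = 0) (hg : g 0 = 0)
    (h : ∀ s, 1 ≤ s → linearCombination K (· ^ s) f = linearCombination K (· ^ s) g) :
    f = g := by
  rw [← sub_eq_zero]
  refine linearIndepOn_iff.mp (linearIndepOn_geometric_succ (K := K)) (f - g) ?_ ?_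
  · rw [mem_supported, Set.subset_compl_singleton_iff, Finset.mem_coe, notMem_support_iff,
      sub_apply, hf, hg, sub_zero]
  · ext s
    rw [map_sub, Pi.sub_apply, Pi.zero_apply, sub_eq_zero]
    simpa [linearCombination_apply, Finsupp.sum, Finset.sum_apply] using h (s + 1) (by omega)

noncomputable def Multiset.countFinsupp (A : Multiset K) : K →₀ K :=
  (A.map fun α => single α 1).sum

theorem Multiset.countFinsupp_apply [DecidableEq K] (A : Multiset K) (α : K) :
    A.countFinsupp α = A.count α := by
  induction A using Multiset.induction_on with
  | empty => simp [countFinsupp]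
  | cons a A ih =>
    rw [Multiset.count_cons]
    simp_all [countFinsupp, single_apply, eq_comm, add_comm]

noncomputable def alternatingCountFinsupp (N : ℕ) (A : ℕ → Multiset K) : K →₀ K :=
  ∑ i ∈ Finset.range (N + 1), (-1 : K) ^ i • (A i).countFinsupp

theorem linearCombination_alternatingCountFinsupp (N : ℕ) (A : ℕ → Multiset K) (v : K → K) :
    linearCombination K v (alternatingCountFinsupp N A) =
      ∑ i ∈ Finset.range (N + 1), (-1 : K) ^ i * ((A i).map v).sum := by
  simp [alternatingCountFinsupp, Multiset.countFinsupp, map_multiset_sum, Multiset.map_map]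

theorem alternatingCountFinsupp_apply [DecidableEq K] (N : ℕ) (A : ℕ → Multiset K) (α : K) :
    alternatingCountFinsupp N A α =
      ∑ i ∈ Finset.range (N + 1), (-1 : K) ^ i * (A i).count α := by
  simp [alternatingCountFinsupp, finsetSum_apply, Multiset.countFinsupp_apply]

noncomputable def Polynomial.coeffFinsuppAtPowers (P : ℤ[X]) (x : K) : K →₀ K :=
  ∑ n ∈ Finset.range (P.natDegree + 1), single (x ^ n) (P.coeff n : K)

theorem Polynomial.linearCombination_coeffFinsuppAtPowers (P : ℤ[X]) (x : K) (s : ℕ) :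
    linearCombination K (· ^ s) (P.coeffFinsuppAtPowers x) = aeval (x ^ s) P := by
  simp [coeffFinsuppAtPowers, aeval_eq_sum_range, ← pow_mul, mul_comm]

theorem Polynomial.coeffFinsuppAtPowers_apply_pow (P : ℤ[X]) {x : K}
    (hx : Function.Injective (x ^ · : ℕ → K)) (m : ℕ) :
    P.coeffFinsuppAtPowers x (x ^ m) = P.coeff m := by
  simp only [coeffFinsuppAtPowers, finsetSum_apply, single_apply_left hx, single_apply,
    Finset.sum_ite_eq', Finset.mem_range]
  split_ifs with hm
  · rfl
  · rw [coeff_eq_zero_of_natDegree_lt (by omega), Int.cast_zero]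

theorem Polynomial.exists_pow_eq_of_coeffFinsuppAtPowers_ne_zero (P : ℤ[X]) {x α : K}
    (h : P.coeffFinsuppAtPowers x α ≠ 0) : ∃ n, α = x ^ n := by
  rw [coeffFinsuppAtPowers, finsetSum_apply] at h
  obtain ⟨n, -, hn⟩ := Finset.exists_ne_zero_of_sum_ne_zero h
  exact ⟨n, (single_apply_ne_zero.mp hn).1⟩

theorem alternatingCountFinsupp_eq_coeffFinsuppAtPowers {N : ℕ} {A : ℕ → Multiset K}
    {P : ℤ[X]} {x : K} (hx : x ≠ 0) (hA : ∀ i ≤ N, (0 : K) ∉ A i)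
    (hP : ∀ s, 1 ≤ s → ∑ i ∈ Finset.range (N + 1), (-1 : K) ^ i * ((A i).map (· ^ s)).sum
      = aeval (x ^ s) P) :
    alternatingCountFinsupp N A = P.coeffFinsuppAtPowers x := by
  classical
  refine Finsupp.eq_of_linearCombination_pow_eq ?_ ?_ fun s hs => ?_
  · rw [alternatingCountFinsupp_apply]
    refine Finset.sum_eq_zero fun i hi => ?_
    rw [Multiset.count_eq_zero_of_notMem (hA i (by simp at hi; omega)), Nat.cast_zero, mul_zero]
  · by_contra h0
    obtain ⟨n, hn⟩ := P.exists_pow_eq_of_coeffFinsuppAtPowers_ne_zero h0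
    exact pow_ne_zero n hx hn.symm
  · rw [linearCombination_alternatingCountFinsupp, linearCombination_coeffFinsuppAtPowers]
    exact hP s hs

theorem coeff_eq_sum_card_of_alternatingCountFinsupp_eq [CharZero K] {N : ℕ}
    {A : ℕ → Multiset K} {P : ℤ[X]} {x : K} (hx : Function.Injective (x ^ · : ℕ → K))
    (hAP : alternatingCountFinsupp N A = P.coeffFinsuppAtPowers x)
    (hA : ∀ i ≤ N, ∀ α ∈ A i, ∃ n, i = 2 * n ∧ α = x ^ n) (n : ℕ) :
    P.coeff n =
      ∑ i ∈ Finset.range (N + 1), if i = 2 * n then (Multiset.card (A i) : ℤ) else 0 := by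
  classical
  have hcount : ∀ i ≤ N,
      (A i).count (x ^ n) = if i = 2 * n then Multiset.card (A i) else 0 := by
    intro i hi
    split_ifs with h
    · refine Multiset.count_eq_card.mpr fun α hα => ?_
      obtain ⟨m, hm, rfl⟩ := hA i hi α hα
      rw [show m = n by omega]
    · refine Multiset.count_eq_zero.mpr fun hα => ?_
      obtain ⟨m, hm, hxm⟩ := hA i hi _ hα
      have := hx hxm
      omega
  have h := DFunLike.congr_fun hAP (x ^ n)
  rw [alternatingCountFinsupp_apply, P.coeffFinsuppAtPowers_apply_pow hx] at h
  rw [← Int.cast_inj (α := K), ← h, Int.cast_sum]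
  refine Finset.sum_congr rfl fun i hi => ?_
  rw [hcount i (by simp at hi; omega)]
  split_ifs with h2 <;> simp [h2, pow_mul]

end

theorem alternatingCountFinsupp_apply_of_norm_eq {K : Type*} [NormedField K] [DecidableEq K]
    {N : ℕ} {A : ℕ → Multiset K} {w : ℕ → ℝ} (hw : Function.Injective w)
    (habs : ∀ i ≤ N, ∀ α ∈ A i, ‖α‖ = w i) {i : ℕ} (hi : i ≤ N) {α : K} (hα : ‖α‖ = w i) :
    alternatingCountFinsupp N A α = (-1 : K) ^ i * (A i).count α := by
  rw [alternatingCountFinsupp_apply]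
  refine Finset.sum_eq_single_of_mem i (by simp; omega) fun j hj hji => ?_
  rw [Multiset.count_eq_zero_of_notMem fun hαj => hji (hw ?_), Nat.cast_zero, mul_zero]
  rw [← hα, habs j (by simp at hj; omega) α hαj]

theorem exists_pow_eq_of_alternatingCountFinsupp_eq {K : Type*} [NormedField K] [CharZero K]
    {N : ℕ} {A : ℕ → Multiset K} {P : ℤ[X]} {x : K} {w : ℕ → ℝ} (hw : Function.Injective w)
    (habs : ∀ i ≤ N, ∀ α ∈ A i, ‖α‖ = w i)
    (hAP : alternatingCountFinsupp N A = P.coeffFinsuppAtPowers x) {i : ℕ} (hi : i ≤ N)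
    {α : K} (hα : α ∈ A i) : ∃ n, α = x ^ n := by
  classical
  refine P.exists_pow_eq_of_coeffFinsuppAtPowers_ne_zero (hAP ▸ ?_)
  rw [alternatingCountFinsupp_apply_of_norm_eq hw habs hi (habs i hi α hα)]
  exact mul_ne_zero (pow_ne_zero _ (by norm_num))
    (Nat.cast_ne_zero.mpr (Multiset.count_ne_zero.mpr hα))

theorem Polynomial.coeff_sum_ite_even_C_mul_X_pow {R : Type*} [Semiring R] (N : ℕ) (c : ℕ → R)
    (n : ℕ) :
    (∑ i ∈ Finset.range (N + 1), if Even i then C (c i) * X ^ (i / 2) else 0).coeff n =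
      ∑ i ∈ Finset.range (N + 1), if i = 2 * n then c i else 0 := by
  rw [finsetSum_coeff]
  refine Finset.sum_congr rfl fun i _ => ?_
  by_cases hi : Even i
  · have hiff : n = i / 2 ↔ i = 2 * n := by obtain ⟨k, rfl⟩ := hi; omega
    simp only [hi, if_true, coeff_C_mul_X_pow, hiff]
  · have hne : i ≠ 2 * n := fun h => hi (h ▸ even_two_mul n)
    simp only [hi, hne, if_false, coeff_zero]

/-- Purity and the trace formula force even-degree cohomology with Frobenius
eigenvalues `q^{i/2}`, and a point-counting polynomial with nonnegative
coefficients. -/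
theorem stmt_14 (q : ℕ) (hq : 2 ≤ q) (N : ℕ) (A : ℕ → Multiset ℂ)
    (habs : ∀ i ≤ N, ∀ α ∈ A i, ‖α‖ = Real.sqrt q ^ i)
    (P : Polynomial ℤ)
    (hP : ∀ s : ℕ, 1 ≤ s →
      ∑ i ∈ Finset.range (N + 1), (-1 : ℂ) ^ i * ((A i).map (fun α => α ^ s)).sum
        = Polynomial.aeval ((q : ℂ) ^ s) P) :
    (∀ i ≤ N, Odd i → A i = 0) ∧
    (∀ i ≤ N, Even i → ∀ α ∈ A i, α = ((Real.sqrt q : ℂ)) ^ i) ∧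
    (P = ∑ i ∈ Finset.range (N + 1),
        if Even i then Polynomial.C ((Multiset.card (A i) : ℤ)) * Polynomial.X ^ (i / 2)
        else 0) ∧
    (∀ n : ℕ, 0 ≤ P.coeff n) := by
  have hsqrt : 1 < Real.sqrt q := by
    rw [Real.lt_sqrt zero_le_one, one_pow]
    exact_mod_cast hq
  have hw : Function.Injective (Real.sqrt q ^ · : ℕ → ℝ) :=
    pow_right_injective₀ (by positivity) hsqrt.ne'
  have hnorm : ∀ n, ‖(q : ℂ) ^ n‖ = Real.sqrt q ^ (2 * n) := fun n => by
    simp [pow_mul, Real.sq_sqrt]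
  have hinj : Function.Injective (fun n => (q : ℂ) ^ n) := fun a b h => by
    simpa using hw ((hnorm a).symm.trans ((congrArg norm h).trans (hnorm b)))
  have hA0 : ∀ i ≤ N, (0 : ℂ) ∉ A i := fun i hi h0 =>
    (pow_pos (zero_lt_one.trans hsqrt) i).ne' ((habs i hi 0 h0).symm.trans norm_zero)
  have hAP : alternatingCountFinsupp N A = P.coeffFinsuppAtPowers (q : ℂ) :=
    alternatingCountFinsupp_eq_coeffFinsuppAtPowers (by norm_cast; omega) hA0 hP
  have hA : ∀ i ≤ N, ∀ α ∈ A i, ∃ n, i = 2 * n ∧ α = (q : ℂ) ^ n := fun i hi α hα => by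
    obtain ⟨n, rfl⟩ := exists_pow_eq_of_alternatingCountFinsupp_eq hw habs hAP hi hα
    exact ⟨n, hw ((habs i hi _ hα).symm.trans (hnorm n)), rfl⟩
  have hcoeff := coeff_eq_sum_card_of_alternatingCountFinsupp_eq hinj hAP hA
  refine ⟨fun i hi hodd => ?_, fun i hi _ α hα => ?_, ?_, fun n => ?_⟩
  · refine Multiset.eq_zero_of_forall_notMem fun α hα => ?_
    obtain ⟨n, rfl, -⟩ := hA i hi α hα
    exact Nat.not_odd_iff_even.mpr (even_two_mul n) hodd
  · obtain ⟨n, rfl, rfl⟩ := hA i hi α hα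
    rw [pow_mul, ← Complex.ofReal_pow, Real.sq_sqrt (Nat.cast_nonneg q), Complex.ofReal_natCast]
  · ext n
    rw [hcoeff, coeff_sum_ite_even_C_mul_X_pow]
  · rw [hcoeff]
    exact Finset.sum_nonneg fun i _ => by split_ifs <;> positivity
end
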